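/- arXiv:1908.03953 — 8 statements merged into one kernel-verified Lean document; each statement's English description precedes it below -/
import Mathlib

section
/- The number of integer partitions of n ≥ 1 of the form (a^b, 1^c) with a ≥ 2, b ≥ 1, c ≥ 0, a·b + c = n, together with the partition (1^n), equals 1 + Σ_{m=1}^{n} (σ₀(m) − 1). -/
def onesPart (n : ℕ) : n.Partition where
  parts := Multiset.replicate n 1
  parts_pos := fun {i} hi => by rw [Multiset.eq_of_mem_replicate hi]; omega
  parts_sum := by simp

def recPart (n a b : ℕ) (ha : 2 ≤ a) (hb : 1 ≤ b) (h : a * b ≤ n) : n.Partition where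
  parts := Multiset.replicate b a + Multiset.replicate (n - a * b) 1
  parts_pos := fun {i} hi => by
    rcases Multiset.mem_add.1 hi with h' | h' <;> rw [Multiset.eq_of_mem_replicate h'] <;> omega
  parts_sum := by
    simp [Multiset.sum_replicate, smul_eq_mul]
    have := Nat.mul_comm a b
    omega

lemma rep_key {a b c a' b' c' : ℕ} (ha : 2 ≤ a) (hb : 1 ≤ b) (ha' : 2 ≤ a') (hb' : 1 ≤ b')
    (h : Multiset.replicate b a + Multiset.replicate c 1
       = Multiset.replicate b' a' + Multiset.replicate c' 1) : a = a' ∧ b = b' := by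
  have h1 := congrArg (Multiset.count a) h
  have h2 := congrArg (Multiset.count a') h
  simp [Multiset.count_replicate] at h1 h2
  split_ifs at h1 h2 <;> omega

lemma filter_div_card {m : ℕ} (hm : 1 ≤ m) :
    (m.divisors.filter (fun a => 2 ≤ a)).card = m.divisors.card - 1 := by
  have : m.divisors.filter (fun a => 2 ≤ a) = m.divisors.erase 1 := by
    ext a
    simp only [Finset.mem_filter, Finset.mem_erase]
    constructor
    · rintro ⟨h1, h2⟩; exact ⟨by omega, h1⟩
    · rintro ⟨h1, h2⟩; exact ⟨h2, by have := Nat.pos_of_mem_divisors h2; omega⟩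
  rw [this, Finset.card_erase_of_mem (Nat.one_mem_divisors.2 (by omega))]

/-- The number of partitions of `n ≥ 1` of the form `(a^b, 1^c)` with `a ≥ 2`, `b ≥ 1`,
`c ≥ 0`, together with the partition `(1^n)`, equals `1 + Σ_{m=1}^{n} (σ₀(m) − 1)`. -/
theorem stmt_4 (n : ℕ) (hn : 1 ≤ n) :
    Set.ncard {p : n.Partition |
        p.parts = Multiset.replicate n 1 ∨
        ∃ a b c : ℕ, 2 ≤ a ∧ 1 ≤ b ∧
          p.parts = Multiset.replicate b a + Multiset.replicate c 1}
      = 1 + ∑ m ∈ Finset.Icc 1 n, (m.divisors.card - 1) := by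
  set T : Finset ((_ : ℕ) × ℕ) :=
    (Finset.Icc 1 n).sigma (fun m => m.divisors.filter (fun a => 2 ≤ a)) with hT
  have memT : ∀ x : (_ : ℕ) × ℕ, x ∈ T → 2 ≤ x.2 ∧ x.2 ∣ x.1 ∧ 1 ≤ x.1 ∧ x.1 ≤ n := by
    intro x hx
    rw [hT, Finset.mem_sigma, Finset.mem_Icc] at hx
    obtain ⟨⟨h1, h2⟩, h3⟩ := hx
    rw [Finset.mem_filter, Nat.mem_divisors] at h3
    exact ⟨h3.2, h3.1.1, h1, h2⟩
  have hb' : ∀ x : (_ : ℕ) × ℕ, x ∈ T → 1 ≤ x.1 / x.2 := by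
    intro x hx
    obtain ⟨h1, h2, h3, h4⟩ := memT x hx
    exact Nat.one_le_div_iff (by omega) |>.2 (Nat.le_of_dvd (by omega) h2)
  have hmul : ∀ x : (_ : ℕ) × ℕ, x ∈ T → x.2 * (x.1 / x.2) = x.1 := by
    intro x hx
    obtain ⟨h1, h2, h3, h4⟩ := memT x hx
    exact Nat.mul_div_cancel' h2
  have hle : ∀ x : (_ : ℕ) × ℕ, x ∈ T → x.2 * (x.1 / x.2) ≤ n := by
    intro x hx; rw [hmul x hx]; exact (memT x hx).2.2.2
  set g : T → n.Partition := fun x =>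
    recPart n x.1.2 (x.1.1 / x.1.2) (memT x.1 x.2).1 (hb' x.1 x.2) (hle x.1 x.2) with hg
  set F : Finset n.Partition := insert (onesPart n) (Finset.image g T.attach) with hF
  have hset : {p : n.Partition |
        p.parts = Multiset.replicate n 1 ∨
        ∃ a b c : ℕ, 2 ≤ a ∧ 1 ≤ b ∧
          p.parts = Multiset.replicate b a + Multiset.replicate c 1} = ↑F := by
    ext p
    simp only [Set.mem_setOf_eq, hF, Finset.coe_insert, Set.mem_insert_iff,
      Finset.coe_image, Set.mem_image, Finset.mem_coe, Finset.mem_attach, true_and]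
    constructor
    · rintro (h | ⟨a, b, c, ha, hb, hp⟩)
      · left; exact Nat.Partition.ext h
      · right
        have hsum := p.parts_sum
        rw [hp] at hsum
        simp [Multiset.sum_replicate, smul_eq_mul] at hsum
        have hab : a * b ≤ n := by nlinarith
        have hmem : (⟨a * b, a⟩ : (_ : ℕ) × ℕ) ∈ T := by
          rw [hT, Finset.mem_sigma, Finset.mem_Icc, Finset.mem_filter, Nat.mem_divisors]
          refine ⟨⟨by nlinarith, hab⟩, ⟨⟨b, rfl⟩, by positivity⟩, ha⟩
        refine ⟨⟨⟨a * b, a⟩, hmem⟩, ?_⟩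
        apply Nat.Partition.ext
        rw [hg]
        show (recPart n a ((a*b)/a) _ _ _).parts = p.parts
        rw [hp]
        have hdiv : a * b / a = b := Nat.mul_div_cancel_left b (by omega)
        simp only [recPart, hdiv]
        congr 1
        have hsum' : a * b + c = n := by nlinarith
        have hc : n - a * b = c := by omega
        rw [hc]
    · rintro (h | ⟨x, rfl⟩)
      · left; rw [h]; rfl
      · right
        exact ⟨x.1.2, x.1.1 / x.1.2, n - x.1.2 * (x.1.1 / x.1.2),
          (memT x.1 x.2).1, hb' x.1 x.2, rfl⟩
  rw [hset, Set.ncard_coe_finset]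
  have hnotmem : onesPart n ∉ Finset.image g T.attach := by
    intro h
    rw [Finset.mem_image] at h
    obtain ⟨x, _, hx⟩ := h
    have := congrArg Nat.Partition.parts hx
    rw [hg] at this
    have hcount := congrArg (Multiset.count x.1.2) this
    have h2 := (memT x.1 x.2).1
    have hb := hb' x.1 x.2
    simp [recPart, onesPart, Multiset.count_replicate] at hcount
    split_ifs at hcount <;> omega
  have hinj : Function.Injective g := by
    intro x y hxy
    have := congrArg Nat.Partition.parts hxy
    rw [hg] at this
    simp only [recPart] at this
    obtain ⟨ha, hab⟩ := rep_key (memT x.1 x.2).1 (hb' x.1 x.2) (memT y.1 y.2).1 (hb' y.1 y.2) this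
    have hx1 : x.1.1 = y.1.1 := by
      conv_lhs => rw [← hmul x.1 x.2]
      conv_rhs => rw [← hmul y.1 y.2]
      rw [hab, ha]
    apply Subtype.ext
    exact Sigma.ext hx1 (heq_of_eq ha)
  rw [hF, Finset.card_insert_of_notMem hnotmem,
    Finset.card_image_of_injective _ hinj, Finset.card_attach]
  rw [hT, Finset.card_sigma]
  rw [add_comm]
  congr 1
  apply Finset.sum_congr rfl
  intro m hm
  exact filter_div_card (Finset.mem_Icc.1 hm).1
end

section
/- If μ is a partition with distinct positive parts and a partition α contains μ, then for any 0 < c ≤ m(α) (where m(α) is the multiplicity of the largest part of α), the partition α + (1^c) (obtained by adding 1 to each of the first c parts of α) contains μ + (1) (obtained by adding 1 to the largest part of μ). -/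
/-- A partition is a weakly decreasing, eventually-zero sequence `ℕ → ℕ` of row lengths. -/
def IsPartitionFun (α : ℕ → ℕ) : Prop :=
  Antitone α ∧ ∃ N, ∀ n ≥ N, α n = 0

/-- `α` contains the pattern `μ`: some rows of `α` may be selected (in order) and some
set `C` of columns deleted so that the resulting left-justified board is exactly `μ`. -/
def Contains (α μ : ℕ → ℕ) : Prop :=
  ∃ (f : ℕ → ℕ) (C : Finset ℕ), StrictMono f ∧
    ∀ i, μ i = (Finset.range (α (f i)) \ C).card

/-- All positive parts of `μ` are distinct. -/
def StrictParts (μ : ℕ → ℕ) : Prop :=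
  ∀ i j, i < j → 0 < μ j → μ j < μ i

/-- In an antitone sequence whose value `α 0` is attained at least `c` times,
the first `c` entries all equal `α 0`. -/
lemma key_init (α : ℕ → ℕ) (hanti : Antitone α) (c : ℕ)
    (hcm : c ≤ Set.ncard {i : ℕ | α i = α 0}) : ∀ k < c, α k = α 0 := by
  intro k hk
  by_contra hne
  have hlt : α k < α 0 := lt_of_le_of_ne (hanti (Nat.zero_le k)) hne
  have hsub : {i : ℕ | α i = α 0} ⊆ ↑(Finset.range k) := by
    intro i hi
    simp only [Set.mem_setOf_eq] at hi
    simp only [Finset.coe_range, Set.mem_Iio]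
    by_contra h'
    push_neg at h'
    have := hanti h'
    omega
  have hle : Set.ncard {i : ℕ | α i = α 0} ≤ k := by
    have h2 := Set.ncard_le_ncard hsub (Finset.finite_toSet _)
    rwa [Set.ncard_coe_finset, Finset.card_range] at h2
  omega

/-- If `μ` is strict and `α` contains `μ`, then for `0 < c ≤ m(α)` (the multiplicity of the
largest part of `α`), the partition `α + (1^c)` contains `μ + (1)`. -/
theorem stmt_11 (α μ : ℕ → ℕ) (hα : IsPartitionFun α) (hμ : StrictParts μ)
    (h : Contains α μ) (c : ℕ) (hc : 0 < c)
    (hcm : c ≤ Set.ncard {i : ℕ | α i = α 0}) :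
    Contains (fun i => if i < c then α i + 1 else α i)
      (fun i => if i = 0 then μ 0 + 1 else μ i) := by
  obtain ⟨hanti, -⟩ := hα
  obtain ⟨f, C, hf, hμC⟩ := h
  have hinit := key_init α hanti c hcm
  by_cases h0 : μ 0 = 0
  · -- Case A : all parts of μ are 0
    have hall : ∀ i, μ i = 0 := by
      intro i
      have h1 : μ i ≤ μ 0 := by
        rw [hμC i, hμC 0]
        apply Finset.card_le_card
        intro x hx
        simp only [Finset.mem_sdiff, Finset.mem_range] at hx ⊢
        have : α (f i) ≤ α (f 0) := hanti (hf.monotone (Nat.zero_le i))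
        exact ⟨by omega, hx.2⟩
      omega
    refine ⟨fun i => if i = 0 then 0 else c - 1 + i, Finset.range (α 0), ?_, ?_⟩
    · intro i j hij
      simp only
      split_ifs <;> omega
    · intro i
      rcases Nat.eq_zero_or_pos i with rfl | hi
      · simp only
        rw [if_true, if_true, if_pos hc, h0]
        rw [Finset.card_sdiff_of_subset (Finset.range_subset_range.mpr (Nat.le_succ _))]
        simp
      · have hi0 : i ≠ 0 := by omega
        simp only
        rw [if_neg hi0, if_neg hi0]
        have hge : ¬ (c - 1 + i < c) := by omega
        rw [if_neg hge, hall i, Finset.sdiff_eq_empty_iff_subset.mpr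
          (Finset.range_subset_range.mpr (hanti (Nat.zero_le _))), Finset.card_empty]
  · -- Case B : μ 0 > 0, so all selected rows after the first lie below row c
    have hfc : ∀ i, 0 < i → c ≤ f i := by
      intro i hi
      by_contra h'
      push_neg at h'
      have hf0 : f 0 < c := lt_trans (hf hi) h'
      have e1 : α (f i) = α 0 := hinit _ h'
      have e2 : α (f 0) = α 0 := hinit _ hf0
      have hμi : μ i = μ 0 := by rw [hμC i, hμC 0, e1, e2]
      have := hμ 0 i hi (by omega)
      omega
    have hle0 : α (f 0) ≤ α 0 := hanti (Nat.zero_le _)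
    refine ⟨fun i => if i = 0 then 0 else f i,
      Finset.range (α 0) \ (Finset.range (α (f 0)) \ C), ?_, ?_⟩
    · intro i j hij
      simp only
      split_ifs with h1 h2 h2
      · omega
      · have := hfc j (by omega)
        omega
      · omega
      · exact hf hij
    · intro i
      rcases Nat.eq_zero_or_pos i with rfl | hi
      · simp only
        rw [if_true, if_true, if_pos hc]
        have hset : Finset.range (α 0 + 1) \ (Finset.range (α 0) \ (Finset.range (α (f 0)) \ C))
            = insert (α 0) (Finset.range (α (f 0)) \ C) := by
          ext x
          simp only [Finset.mem_sdiff, Finset.mem_range, Finset.mem_insert, not_and, not_not]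
          by_cases hC : x ∈ C <;> simp [hC] <;> omega
        rw [hset, Finset.card_insert_of_notMem (by
          simp only [Finset.mem_sdiff, Finset.mem_range]
          intro hmem
          omega), ← hμC 0]
      · have hi0 : i ≠ 0 := by omega
        have hge : ¬ (f i < c) := by
          have := hfc i hi
          omega
        simp only
        rw [if_neg hi0, if_neg hi0, if_neg hge]
        have hlei : α (f i) ≤ α (f 0) := hanti (hf.monotone (Nat.zero_le i))
        have hset : Finset.range (α (f i)) \ (Finset.range (α 0) \ (Finset.range (α (f 0)) \ C))
            = Finset.range (α (f i)) \ C := by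
          ext x
          simp only [Finset.mem_sdiff, Finset.mem_range, not_and, not_not]
          by_cases hC : x ∈ C <;> simp [hC] <;> omega
        rw [hset, hμC i]
end

section
/- Let μ be a partition with distinct positive parts and let α be a partition. Form α⁺ by prepending m ≥ 1 new rows of common length a > α₁ to α. Then α contains μ if and only if α⁺ contains the partition μ↗ = (μ₁+1, μ₁, μ₂, μ₃, …). -/
/-- Let `μ` be strict and let `α⁺` be obtained from `α` by prepending `m ≥ 1` rows of
common length `a > α₁`.  Then `α` contains `μ` iff `α⁺` contains
`μ↗ = (μ₁+1, μ₁, μ₂, μ₃, …)`. -/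
theorem stmt_12 (α μ : ℕ → ℕ) (hα : IsPartitionFun α) (hμ : StrictParts μ)
    (a m : ℕ) (ha : α 0 < a) (hm : 0 < m) :
    Contains α μ ↔
      Contains (fun i => if i < m then a else α (i - m))
        (fun i => if i = 0 then μ 0 + 1 else if i = 1 then μ 0 else μ (i - 1)) := by
  obtain ⟨hanti, -⟩ := hα
  constructor
  · rintro ⟨f, C, hf, hC⟩
    refine ⟨fun i => if i = 0 then 0 else f (i - 1) + m,
      (C ∪ Finset.Ico (α (f 0)) a).erase (α 0), ?_, ?_⟩
    · intro i j hij
      have hj : j ≠ 0 := by omega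
      rcases Nat.eq_zero_or_pos i with hi | hi
      · subst hi
        show (if (0:ℕ) = 0 then 0 else f (0-1) + m) < (if j = 0 then 0 else f (j-1) + m)
        rw [if_neg hj]
        show 0 < f (j - 1) + m
        omega
      · have h1 : i - 1 < j - 1 := by omega
        show (if i = 0 then 0 else f (i-1) + m) < (if j = 0 then 0 else f (j-1) + m)
        rw [if_neg hi.ne', if_neg hj]
        exact Nat.add_lt_add_right (hf h1) m
    · have key : ∀ b, b ≤ α (f 0) →
          Finset.range b \ (C ∪ Finset.Ico (α (f 0)) a).erase (α 0)
            = Finset.range b \ C := by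
        intro b hb
        have hb0 : b ≤ α 0 := hb.trans (hanti (Nat.zero_le _))
        ext x
        simp only [Finset.mem_sdiff, Finset.mem_erase, Finset.mem_union,
          Finset.mem_Ico, Finset.mem_range]
        constructor
        · rintro ⟨h1, h2⟩
          exact ⟨h1, fun hc => h2 ⟨by omega, Or.inl hc⟩⟩
        · rintro ⟨h1, h2⟩
          refine ⟨h1, ?_⟩
          rintro ⟨-, hc | ⟨hge, -⟩⟩
          · exact h2 hc
          · omega
      intro i
      rcases Nat.eq_zero_or_pos i with hi | hi
      · subst hi
        have hsub : Finset.range a \ (C ∪ Finset.Ico (α (f 0)) a).erase (α 0)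
            = insert (α 0) (Finset.range (α (f 0)) \ C) := by
          have hf0 : α (f 0) ≤ α 0 := hanti (Nat.zero_le _)
          ext x
          simp only [Finset.mem_sdiff, Finset.mem_erase, Finset.mem_union,
            Finset.mem_Ico, Finset.mem_range, Finset.mem_insert]
          constructor
          · rintro ⟨h1, h2⟩
            by_cases hx : x = α 0
            · exact Or.inl hx
            · refine Or.inr ⟨?_, fun hc => h2 ⟨hx, Or.inl hc⟩⟩
              by_contra hge
              exact h2 ⟨hx, Or.inr ⟨by omega, h1⟩⟩
          · rintro (rfl | ⟨h1, h2⟩)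
            · exact ⟨ha, fun h => h.1 rfl⟩
            · refine ⟨by omega, ?_⟩
              rintro ⟨-, hc | ⟨hge, -⟩⟩
              · exact h2 hc
              · omega
        show μ 0 + 1 = (Finset.range (if 0 < m then a else α (0 - m)) \
          (C ∪ Finset.Ico (α (f 0)) a).erase (α 0)).card
        rw [if_pos hm, hsub, Finset.card_insert_of_notMem (by
          simp only [Finset.mem_sdiff, Finset.mem_range]
          intro h
          exact absurd h.1 (not_lt.mpr (hanti (Nat.zero_le _)))), ← hC 0]
      · have hi' : ¬ (f (i - 1) + m < m) := by omega
        show (if i = 0 then μ 0 + 1 else if i = 1 then μ 0 else μ (i - 1)) =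
          (Finset.range ((fun k => if k < m then a else α (k - m))
            (if i = 0 then 0 else f (i - 1) + m)) \
            (C ∪ Finset.Ico (α (f 0)) a).erase (α 0)).card
        rw [if_neg hi.ne', if_neg hi.ne']
        show _ = (Finset.range (if f (i-1) + m < m then a else α (f (i-1) + m - m)) \ _).card
        rw [if_neg hi', Nat.add_sub_cancel,
          key _ (hanti (hf.monotone (Nat.zero_le _)))]
        by_cases h1 : i = 1
        · subst h1
          show μ 0 = _
          exact hC 0
        · rw [if_neg h1]
          exact hC (i - 1)
  · rintro ⟨g, C, hg, hC⟩
    have hg1 : m ≤ g 1 := by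
      by_contra h
      push_neg at h
      have h0 : g 0 < m := (hg Nat.zero_lt_one).trans h
      have e0 : μ 0 + 1 = (Finset.range (if g 0 < m then a else α (g 0 - m)) \ C).card := hC 0
      have e1 : μ 0 = (Finset.range (if g 1 < m then a else α (g 1 - m)) \ C).card := hC 1
      rw [if_pos h0] at e0
      rw [if_pos h] at e1
      omega
    refine ⟨fun i => g (i + 1) - m, C, ?_, ?_⟩
    · intro i j hij
      have h1 : m ≤ g (i + 1) := hg1.trans (hg.monotone (by omega))
      have h2 : g (i + 1) < g (j + 1) := hg (by omega)
      show g (i + 1) - m < g (j + 1) - m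
      omega
    · intro i
      have hge : m ≤ g (i + 1) := hg1.trans (hg.monotone (by omega))
      have e : (if i + 1 = 0 then μ 0 + 1 else if i + 1 = 1 then μ 0 else μ (i + 1 - 1)) =
          (Finset.range (if g (i + 1) < m then a else α (g (i + 1) - m)) \ C).card := hC (i + 1)
      rw [if_neg (Nat.succ_ne_zero i), if_neg (by omega : ¬ g (i + 1) < m)] at e
      show μ i = (Finset.range (α (g (i + 1) - m)) \ C).card
      rcases Nat.eq_zero_or_pos i with hi | hi
      · subst hi
        rw [if_pos rfl] at e
        exact e
      · rw [if_neg (by omega : i + 1 ≠ 1), Nat.add_sub_cancel] at e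
        exact e
end

section
/- Let μ be a partition with distinct positive parts, let α be a partition, and let α⁻ be obtained from α by deleting the top k rows where k is strictly less than the multiplicity of the largest part of α. Then α contains μ if and only if α⁻ contains μ. -/
/-- Let `μ` be strict and `α⁻` be obtained from `α` by deleting the top `k` rows, where
`k` is strictly less than the multiplicity of the largest part of `α`.  Then `α` contains
`μ` iff `α⁻` contains `μ`. -/
theorem stmt_13 (α μ : ℕ → ℕ) (hα : IsPartitionFun α) (hμ : StrictParts μ)
    (k : ℕ) (hk : k < Set.ncard {i : ℕ | α i = α 0}) :
    Contains α μ ↔ Contains (fun i => α (i + k)) μ := by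
  obtain ⟨hmono, N, hN⟩ := hα
  have hak : α k = α 0 := by
    by_contra h
    have h1 : α k < α 0 := lt_of_le_of_ne (hmono (Nat.zero_le k)) h
    have hsub : {i : ℕ | α i = α 0} ⊆ ↑(Finset.range k) := by
      intro i hi
      simp only [Finset.coe_range, Set.mem_Iio]
      by_contra hik
      push_neg at hik
      have h2 := hmono hik
      simp only [Set.mem_setOf_eq] at hi
      omega
    have h3 := Set.ncard_le_ncard hsub (Finset.range k).finite_toSet
    rw [Set.ncard_coe_finset, Finset.card_range] at h3
    omega
  constructor
  · rintro ⟨f, C, hf, hC⟩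
    have hμN : μ N = 0 := by
      have hz : α (f N) = 0 := hN _ hf.le_apply
      rw [hC, hz]
      simp
    have hex : ∃ i, μ i = 0 := ⟨N, hμN⟩
    obtain ⟨t, ht0, htpos⟩ : ∃ t, μ t = 0 ∧ ∀ i < t, 0 < μ i :=
      ⟨Nat.find hex, Nat.find_spec hex, fun i hi => Nat.pos_of_ne_zero (Nat.find_min hex hi)⟩
    have htzero : ∀ i, t ≤ i → μ i = 0 := by
      intro i hi
      rcases eq_or_lt_of_le hi with h|hlt
      · rw [← h]; exact ht0
      · by_contra h
        have h1 := hμ t i hlt (Nat.pos_of_ne_zero h)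
        omega
    have hchain : ∀ i j, i < j → j < t → α (f j) < α (f i) := by
      intro i j hij hjt
      have h1 : α (f j) ≤ α (f i) := hmono (hf hij).le
      rcases h1.lt_or_eq with h|h
      · exact h
      · exfalso
        have heq : μ i = μ j := by rw [hC, hC, h]
        have := hμ i j hij (htpos j hjt)
        omega
    rcases Nat.eq_zero_or_pos t with rfl|htp
    · refine ⟨fun i => N + i, ∅, fun a b hab => by dsimp only; omega, fun i => ?_⟩
      show μ i = (Finset.range (α (N + i + k)) \ ∅).card
      have hz : α (N + i + k) = 0 := hN _ (by omega)
      rw [hz, htzero i (by omega)]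
      simp
    · have hfk : ∀ i, 0 < i → i < t → k < f i := by
        intro i h0 hit
        by_contra h
        push_neg at h
        have h1 : α 0 ≤ α (f i) := hak ▸ hmono h
        have h2 : α (f i) < α (f 0) := hchain 0 i h0 hit
        have h3 : α (f 0) ≤ α 0 := hmono (Nat.zero_le _)
        omega
      have haA : α (f 0) ≤ α 0 := hmono (Nat.zero_le _)
      refine ⟨fun i => if i = 0 then 0 else if i < t then f i - k else N + f i,
              C ∪ Finset.Ico (α (f 0)) (α 0), ?_, ?_⟩
      · apply strictMono_nat_of_lt_succ
        intro i
        have hfi : f i < f (i + 1) := hf (Nat.lt_succ_self i)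
        show (if i = 0 then 0 else if i < t then f i - k else N + f i) <
          (if i + 1 = 0 then 0 else if i + 1 < t then f (i + 1) - k else N + f (i + 1))
        rw [if_neg (Nat.succ_ne_zero i)]
        by_cases h1 : i + 1 < t
        · have hb := hfk (i + 1) (Nat.succ_pos i) h1
          rw [if_pos h1]
          rcases Nat.eq_zero_or_pos i with rfl|hi
          · rw [if_pos rfl]; omega
          · have := hfk i hi (by omega)
            rw [if_neg (by omega), if_pos (by omega)]
            omega
        · rw [if_neg h1]
          rcases Nat.eq_zero_or_pos i with rfl|hi
          · rw [if_pos rfl]; omega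
          · by_cases h2 : i < t
            · have := hfk i hi h2
              rw [if_neg (by omega), if_pos h2]
              omega
            · rw [if_neg (by omega), if_neg h2]
              omega
      · intro i
        show μ i = (Finset.range (α ((if i = 0 then 0 else if i < t then f i - k
            else N + f i) + k)) \ (C ∪ Finset.Ico (α (f 0)) (α 0))).card
        rcases Nat.eq_zero_or_pos i with rfl|hi
        · rw [if_pos rfl, Nat.zero_add, hak, hC 0]
          congr 1
          ext x
          simp only [Finset.mem_sdiff, Finset.mem_range, Finset.mem_union,
            Finset.mem_Ico, not_or, not_and, not_lt]
          constructor
          · rintro ⟨h1, h2⟩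
            exact ⟨by omega, h2, fun hax => by omega⟩
          · rintro ⟨h1, h2, h3⟩
            refine ⟨?_, h2⟩
            by_contra hh
            push_neg at hh
            have := h3 hh
            omega
        · by_cases hit : i < t
          · have hki := hfk i hi hit
            have hlt : α (f i) < α (f 0) := hchain 0 i hi hit
            rw [if_neg (by omega), if_pos hit]
            have hfik : f i - k + k = f i := by omega
            rw [hfik, hC i]
            congr 1
            ext x
            simp only [Finset.mem_sdiff, Finset.mem_range, Finset.mem_union,
              Finset.mem_Ico, not_or, not_and, not_lt]
            constructor
            · rintro ⟨h1, h2⟩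
              exact ⟨h1, h2, fun hax => by omega⟩
            · rintro ⟨h1, h2, h3⟩
              exact ⟨h1, h2⟩
          · rw [if_neg (by omega), if_neg hit]
            have hz : α (N + f i + k) = 0 := hN _ (by omega)
            rw [hz, htzero i (by omega)]
            simp
  · rintro ⟨f, C, hf, hC⟩
    refine ⟨fun i => f i + k, C, fun a b hab => by dsimp only; exact Nat.add_lt_add_right (hf hab) k, fun i => hC i⟩
end

section
/- A partition avoids the pattern (K+2, 1) (for fixed K ≥ 1) if and only if any two of its positive parts differ by at most K. -/
/-- For `K ≥ 1`, a partition avoids the pattern `(K+2, 1)` iff any two of its positive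
parts differ by at most `K`. -/
theorem stmt_14 (K : ℕ) (hK : 1 ≤ K) (α : ℕ → ℕ) (hα : IsPartitionFun α) :
    ¬ Contains α (fun i => if i = 0 then K + 2 else if i = 1 then 1 else 0) ↔
      ∀ i j, 0 < α i → 0 < α j → α i ≤ α j + K := by
  obtain ⟨hanti, N, hN⟩ := hα
  constructor
  · -- ¬ Contains → bounded differences
    intro hnc i j hi hj
    by_contra hlt
    push_neg at hlt
    apply hnc
    -- i < j since α i > α j
    have hij : i < j := by
      by_contra h
      push_neg at h
      have := hanti h
      omega
    set M := max j N with hM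
    refine ⟨fun n => match n with | 0 => i | 1 => j | (m+2) => M + m + 2,
      Finset.Ico 1 (α j) ∪ Finset.Ico (α j + K + 1) (α i), ?_, ?_⟩
    · apply strictMono_nat_of_lt_succ
      intro n
      match n with
      | 0 => show i < j; omega
      | 1 => show j < M + 0 + 2; omega
      | (m+2) => show M + m + 2 < M + (m+1) + 2; omega
    · intro n
      match n with
      | 0 =>
        show K + 2 = _
        norm_num
        have : Finset.range (α i) \
            (Finset.Ico 1 (α j) ∪ Finset.Ico (α j + K + 1) (α i)) =
            {0} ∪ Finset.Ico (α j) (α j + K + 1) := by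
          ext x
          simp only [Finset.mem_sdiff, Finset.mem_range, Finset.mem_union,
            Finset.mem_Ico, Finset.mem_singleton, Finset.mem_insert]
          omega
        rw [this, Finset.card_union_of_disjoint]
        · simp; omega
        · simp [Finset.disjoint_left, Finset.mem_Ico]; omega
      | 1 =>
        show (1:ℕ) = _
        norm_num
        have : Finset.range (α j) \
            (Finset.Ico 1 (α j) ∪ Finset.Ico (α j + K + 1) (α i)) = {0} := by
          ext x
          simp only [Finset.mem_sdiff, Finset.mem_range, Finset.mem_union,
            Finset.mem_Ico, Finset.mem_singleton]
          omega
        rw [this]; simp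
      | (m+2) =>
        show (0:ℕ) = _
        have h0 : α (M + m + 2) = 0 := hN _ (by omega)
        simp [h0]
  · -- bounded differences → ¬ Contains
    rintro h ⟨f, C, hf, hC⟩
    have h0 := hC 0
    have h1 := hC 1
    simp only [reduceIte] at h0 h1
    have hp0 : 0 < α (f 0) := by
      by_contra hz
      push_neg at hz
      interval_cases hα : α (f 0)
      simp at h0
    have hp1 : 0 < α (f 1) := by
      by_contra hz
      push_neg at hz
      interval_cases hα : α (f 1)
      simp at h1
    have hle : α (f 0) ≤ α (f 1) + K := h (f 0) (f 1) hp0 hp1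
    have hsub : Finset.range (α (f 0)) \ C ⊆
        (Finset.range (α (f 1)) \ C) ∪ Finset.Ico (α (f 1)) (α (f 0)) := by
      intro x hx
      simp only [Finset.mem_sdiff, Finset.mem_range] at hx
      simp only [Finset.mem_union, Finset.mem_sdiff, Finset.mem_range, Finset.mem_Ico]
      rcases lt_or_ge x (α (f 1)) with hx1 | hx1
      · exact Or.inl ⟨hx1, hx.2⟩
      · exact Or.inr ⟨hx1, hx.1⟩
    have hcard := Finset.card_le_card hsub
    have hcu := Finset.card_union_le (Finset.range (α (f 1)) \ C)
      (Finset.Ico (α (f 1)) (α (f 0)))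
    rw [Nat.card_Ico] at hcu
    have hb0 : (Finset.range (α (f 0)) \ C).card = K + 2 := h0.symm
    have hb1 : (Finset.range (α (f 1)) \ C).card = 1 := h1.symm
    omega
end

section
/- The number of partitions of n into parts of size at most k equals n^{k−1}/(k!·(k−1)!) + O(n^{k−2}), for fixed k ≥ 2. -/
/-!
Removing one copy of a largest part `k + 1` gives
`p_{k+1}(n) = p_k(n) + p_{k+1}(n - (k + 1))`, hence
`p_{k+1}(n) = ∑_m p_k(n - (k + 1) m)`. Inserting `p_k(x) = x^{k-1} / (k! (k-1)!) + O(x^{k-2})`,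
the error terms add up to `O(n^{k-1})` over the at most `n + 1` summands, while the main terms form
a Riemann sum of `x^{k-1}` with mesh `k + 1`; comparing each term with the increments of `x^k`
(Bernoulli's inequality and the mean value bound) shows that this sum is
`n^k / (k (k + 1)) + O(n^{k-1})`, and `(k + 1)! k! = k (k + 1) · k! (k - 1)!`.
-/

open Finset
open scoped Nat

theorem pow_succ_sub_pow_succ_le {R : Type*} [CommRing R] [LinearOrder R] [IsOrderedRing R]
    {a b : R} (hb : 0 ≤ b) (hab : b ≤ a) (d : ℕ) :
    a ^ (d + 1) - b ^ (d + 1) ≤ (d + 1) * (a - b) * a ^ d := by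
  have h := abs_pow_sub_pow_le a b (d + 1)
  rw [abs_of_nonneg (sub_nonneg.2 hab), abs_of_nonneg hb, abs_of_nonneg (hb.trans hab),
    max_eq_left hab, Nat.add_sub_cancel] at h
  push_cast at h
  calc a ^ (d + 1) - b ^ (d + 1) ≤ |a ^ (d + 1) - b ^ (d + 1)| := le_abs_self _
    _ ≤ (a - b) * (d + 1) * a ^ d := h
    _ = (d + 1) * (a - b) * a ^ d := by ring

section StepSum

variable {α : Type*} [AddCommMonoid α] {K : ℕ}

def stepSum (K : ℕ) (f : ℕ → α) (n : ℕ) : α :=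
  ∑ m ∈ range (n / K + 1), f (n - K * m)

theorem stepSum_of_lt (f : ℕ → α) {n : ℕ} (h : n < K) : stepSum K f n = f n := by
  simp [stepSum, Nat.div_eq_of_lt h]

theorem stepSum_of_le (f : ℕ → α) {n : ℕ} (hK : 0 < K) (h : K ≤ n) :
    stepSum K f n = f n + stepSum K f (n - K) := by
  rw [stepSum, Nat.div_eq_sub_div hK h, sum_range_succ', add_comm, stepSum]
  congr 1
  refine sum_congr rfl fun m _ => ?_
  rw [Nat.mul_succ, Nat.sub_sub, add_comm (K * m)]

end StepSum

theorem abs_stepSum_sub_stepSum_le {K n : ℕ} {f g : ℕ → ℝ} {E : ℝ}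
    (hfg : ∀ x ≤ n, |f x - g x| ≤ E) :
    |stepSum K f n - stepSum K g n| ≤ (n + 1) * E := by
  have hE : 0 ≤ E := (abs_nonneg _).trans (hfg 0 n.zero_le)
  have hcard : ((n / K + 1 : ℕ) : ℝ) ≤ n + 1 := by
    exact_mod_cast Nat.succ_le_succ (Nat.div_le_self n K)
  calc |stepSum K f n - stepSum K g n|
      = |∑ m ∈ range (n / K + 1), (f (n - K * m) - g (n - K * m))| := by
        rw [stepSum, stepSum, sum_sub_distrib]
    _ ≤ ∑ m ∈ range (n / K + 1), |f (n - K * m) - g (n - K * m)| := abs_sum_le_sum_abs _ _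
    _ ≤ ∑ _m ∈ range (n / K + 1), E := sum_le_sum fun m _ => hfg _ (Nat.sub_le n _)
    _ ≤ (n + 1) * E := by
        rw [sum_const, card_range, nsmul_eq_mul]
        exact mul_le_mul_of_nonneg_right hcard hE

theorem pow_succ_le_mul_stepSum_pow {K : ℕ} (hK : 0 < K) (d n : ℕ) :
    (n : ℝ) ^ (d + 1) ≤ (d + 1) * K * stepSum K (fun x : ℕ => (x : ℝ) ^ d) n := by
  induction n using Nat.strong_induction_on with
  | _ n ih =>
  rcases lt_or_ge n K with h | h
  · have hnK : (n : ℝ) ≤ K := by exact_mod_cast h.le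
    rw [stepSum_of_lt _ h, pow_succ']
    calc (n : ℝ) * n ^ d ≤ K * n ^ d := by gcongr
      _ ≤ (d + 1) * K * n ^ d := by
        gcongr
        exact le_mul_of_one_le_left K.cast_nonneg (by simp)
  · have hnK : (K : ℝ) ≤ n := by exact_mod_cast h
    have hrec := ih (n - K) (Nat.sub_lt (hK.trans_le h) hK)
    have hterm := pow_succ_sub_pow_succ_le (sub_nonneg.2 hnK) (sub_le_self _ K.cast_nonneg) d
    rw [Nat.cast_sub h] at hrec
    rw [sub_sub_cancel] at hterm
    rw [stepSum_of_le _ hK h, mul_add]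
    linarith

theorem mul_stepSum_pow_le {K : ℕ} (hK : 0 < K) (d n : ℕ) :
    (d + 1) * K * stepSum K (fun x : ℕ => (x : ℝ) ^ d) n ≤ ((n : ℝ) + K) ^ (d + 1) := by
  induction n using Nat.strong_induction_on with
  | _ n ih =>
  have hbern :=
    pow_add_mul_le_add_pow (a := (n : ℝ)) (b := K) n.cast_nonneg (by positivity) (d + 1)
  push_cast at hbern
  rcases lt_or_ge n K with h | h
  · rw [stepSum_of_lt _ h]
    nlinarith [pow_nonneg (Nat.cast_nonneg (α := ℝ) n) (d + 1)]
  · have hrec := ih (n - K) (Nat.sub_lt (hK.trans_le h) hK)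
    rw [Nat.cast_sub h, sub_add_cancel] at hrec
    rw [stepSum_of_le _ hK h, mul_add]
    linarith

theorem abs_stepSum_pow_sub_le {K : ℕ} (hK : 0 < K) (d n : ℕ) :
    |stepSum K (fun x : ℕ => (x : ℝ) ^ d) n - n ^ (d + 1) / ((d + 1) * K)|
      ≤ ((n : ℝ) + K) ^ d := by
  have hpos : (0 : ℝ) < (d + 1) * K := by positivity
  have hlow := pow_succ_le_mul_stepSum_pow hK d n
  have hupp := mul_stepSum_pow_le hK d n
  have hterm := pow_succ_sub_pow_succ_le n.cast_nonneg
    (le_add_of_nonneg_right K.cast_nonneg : (n : ℝ) ≤ n + K) d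
  rw [add_sub_cancel_left] at hterm
  rw [← mul_le_mul_iff_of_pos_left hpos, ← abs_of_pos hpos, ← abs_mul, abs_of_pos hpos,
    mul_sub, mul_div_cancel₀ _ hpos.ne', abs_le]
  constructor <;> linarith

namespace Nat.Partition

theorem restricted_le_succ_of_lt {n k : ℕ} (h : n < k + 1) :
    restricted n (· ≤ k + 1) = restricted n (· ≤ k) := by
  ext p
  simp only [restricted, mem_filter, mem_univ, true_and]
  exact ⟨fun _ i hi => Nat.lt_succ_iff.1 ((le_of_mem_parts hi).trans_lt h),
    fun hp i hi => (hp i hi).trans k.le_succ⟩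

theorem card_restricted_le_succ {n k : ℕ} (h : k + 1 ≤ n) :
    #(restricted n (· ≤ k + 1))
      = #(restricted n (· ≤ k)) + #(restricted (n - (k + 1)) (· ≤ k + 1)) := by
  rw [← card_filter_add_card_filter_not (s := restricted n (· ≤ k + 1)) (k + 1 ∈ ·.parts),
    add_comm]
  congr 1
  · congr 1
    ext p
    simp only [restricted, mem_filter, mem_univ, true_and]
    exact ⟨fun ⟨hp, hk⟩ i hi =>
        Nat.lt_succ_iff.1 <| (hp i hi).lt_of_ne fun h => hk (h ▸ hi),
      fun hp => ⟨fun i hi => (hp i hi).trans k.le_succ,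
        fun hk => (hp _ hk).not_gt k.lt_succ_self⟩⟩
  · let e := partitionWithPartEquiv k.succ_pos h
    refine card_bij' (fun p hp => e ⟨p, (mem_filter.1 hp).2⟩) (fun q _ => (e.symm q).1)
      ?_ ?_ (fun _ _ => by simp [e]) (fun _ _ => by simp [e])
    · intro p hp
      simp only [restricted, mem_filter, mem_univ, true_and] at hp ⊢
      intro i hi
      rw [partitionWithPartEquiv_apply_parts] at hi
      exact hp.1 i (Multiset.mem_of_mem_erase hi)
    · intro q hq
      simp only [restricted, mem_filter, mem_univ, true_and] at hq ⊢
      refine ⟨fun i hi => ?_, (e.symm q).2⟩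
      rw [partitionWithPartEquiv_symm_apply_parts, Multiset.mem_cons] at hi
      exact hi.elim le_of_eq (hq i)

theorem card_restricted_le_succ_eq_stepSum (k n : ℕ) :
    #(restricted n (· ≤ k + 1)) = stepSum (k + 1) (fun m => #(restricted m (· ≤ k))) n := by
  induction n using Nat.strong_induction_on with
  | _ n ih =>
  rcases lt_or_ge n (k + 1) with h | h
  · rw [stepSum_of_lt _ h, restricted_le_succ_of_lt h]
  · rw [stepSum_of_le _ k.succ_pos h, card_restricted_le_succ h,
      ih _ (Nat.sub_lt (k.succ_pos.trans_le h) k.succ_pos)]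

theorem card_restricted_le_one (n : ℕ) : #(restricted n (· ≤ 1)) = 1 := by
  induction n with
  | zero =>
    exact card_eq_one.2 ⟨default, eq_singleton_iff_unique_mem.2
      ⟨by simp [restricted], fun _ _ => Subsingleton.elim _ _⟩⟩
  | succ n ih =>
    rw [card_restricted_le_succ (Nat.le_add_left 1 n), Nat.add_sub_cancel, ih, add_eq_right,
      Finset.card_eq_zero, eq_empty_iff_forall_notMem]
    intro p hp
    obtain ⟨i, hi⟩ := Multiset.exists_mem_of_ne_zero (s := p.parts)
      fun h0 => by simpa [h0] using p.parts_sum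
    exact (p.parts_pos hi).ne' (Nat.le_zero.1 ((mem_filter.1 hp).2 i hi))

end Nat.Partition

open Nat.Partition

theorem abs_card_restricted_le_succ_sub_le (j n : ℕ) {E : ℝ}
    (hE : ∀ x ≤ n, |(#(restricted x (· ≤ j + 1)) : ℝ) - x ^ j / ((j + 1)! * j !)| ≤ E) :
    |(#(restricted n (· ≤ j + 2)) : ℝ) - n ^ (j + 1) / ((j + 2)! * (j + 1)!)|
      ≤ (n + 1) * E + ((n : ℝ) + (j + 2)) ^ j := by
  set c : ℝ := (j + 1)! * j ! with hc
  have hc1 : 1 ≤ c := one_le_mul_of_one_le_of_one_le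
    (by exact_mod_cast (j + 1).factorial_pos) (by exact_mod_cast j.factorial_pos)
  set P := stepSum (j + 2) (fun x => (#(restricted x (· ≤ j + 1)) : ℝ)) n
  set S := stepSum (j + 2) (fun x : ℕ => (x : ℝ) ^ j) n
  have hcount : (#(restricted n (· ≤ j + 2)) : ℝ) = P := by
    rw [card_restricted_le_succ_eq_stepSum]
    simp only [P, stepSum, Nat.cast_sum]
  have hmain : (n : ℝ) ^ (j + 1) / ((j + 2)! * (j + 1)!)
      = n ^ (j + 1) / ((j + 1) * (j + 2)) / c := by
    rw [div_div, hc, Nat.factorial_succ (j + 1), Nat.factorial_succ j]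
    push_cast
    ring
  have hcounts : |P - S / c| ≤ (n + 1) * E := by
    have hS : stepSum (j + 2) (fun x : ℕ => (x : ℝ) ^ j / c) n = S / c := by
      simp only [S, stepSum, sum_div]
    rw [← hS]
    exact abs_stepSum_sub_stepSum_le hE
  have hpowers : |S / c - n ^ (j + 1) / ((j + 1) * (j + 2)) / c| ≤ ((n : ℝ) + (j + 2)) ^ j := by
    rw [← sub_div, abs_div, abs_of_pos (a := c) (by linarith), div_le_iff₀ (by linarith)]
    have h := abs_stepSum_pow_sub_le (K := j + 2) (by omega) j n
    push_cast at h
    exact h.trans (le_mul_of_one_le_right (by positivity) hc1)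
  rw [hcount, hmain]
  exact (abs_sub_le P (S / c) _).trans (add_le_add hcounts hpowers)

theorem exists_abs_card_restricted_sub_le (j : ℕ) : ∃ C : ℝ, 0 ≤ C ∧ ∀ n : ℕ,
    |(#(restricted n (· ≤ j + 2)) : ℝ) - n ^ (j + 1) / ((j + 2)! * (j + 1)!)|
      ≤ C * (n + 1) ^ j := by
  induction j with
  | zero =>
    refine ⟨1, zero_le_one, fun n => ?_⟩
    simpa using abs_card_restricted_le_succ_sub_le 0 n (E := 0) fun x _ => by
      simp [card_restricted_le_one]
  | succ j ih =>
    obtain ⟨C, hC, hbound⟩ := ih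
    refine ⟨C + (j + 3) ^ (j + 1), by positivity, fun n => ?_⟩
    have hstep := abs_card_restricted_le_succ_sub_le (j + 1) n (E := C * (n + 1) ^ j)
      fun x hx => (hbound x).trans (by gcongr)
    have hshift : (n : ℝ) + (j + 1 + 2) ≤ (j + 3) * (n + 1) := by
      nlinarith [n.cast_nonneg (α := ℝ)]
    have hpow := pow_le_pow_left₀ (by positivity) hshift (j + 1)
    rw [mul_pow] at hpow
    push_cast at hstep ⊢
    calc _ ≤ _ := hstep
      _ ≤ C * (n + 1) ^ (j + 1) + (j + 3) ^ (j + 1) * (n + 1) ^ (j + 1) := by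
        rw [show ((n : ℝ) + 1) * (C * (n + 1) ^ j) = C * (n + 1) ^ (j + 1) by ring]
        linarith
      _ = _ := by ring

/-- For fixed `k ≥ 2`, the number of partitions of `n` into parts of size at most `k`
equals `n^{k−1}/(k!·(k−1)!) + O(n^{k−2})`. -/
theorem stmt_16 (k : ℕ) (hk : 2 ≤ k) :
    ∃ C : ℝ, 0 < C ∧ ∀ n : ℕ, 1 ≤ n →
      |(Set.ncard {p : n.Partition | ∀ i ∈ p.parts, i ≤ k} : ℝ)
          - (n : ℝ) ^ (k - 1) / ((Nat.factorial k : ℝ) * (Nat.factorial (k - 1) : ℝ))|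
        ≤ C * (n : ℝ) ^ (k - 2) := by
  obtain ⟨j, rfl⟩ := Nat.exists_eq_add_of_le' hk
  obtain ⟨C, hC, hbound⟩ := exists_abs_card_restricted_sub_le j
  refine ⟨C * 2 ^ j + 1, by positivity, fun n hn => ?_⟩
  have hset : {p : n.Partition | ∀ i ∈ p.parts, i ≤ j + 2}
      = ↑(restricted n (· ≤ j + 2)) := by
    ext
    simp [restricted]
  have hn1 : ((n : ℝ) + 1) ^ j ≤ 2 ^ j * n ^ j := by
    have : (1 : ℝ) ≤ n := by exact_mod_cast hn
    rw [← mul_pow]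
    gcongr
    linarith
  rw [hset, Set.ncard_coe_finset, show j + 2 - 1 = j + 1 by omega, show j + 2 - 2 = j by omega]
  calc _ ≤ C * (n + 1) ^ j := hbound n
    _ ≤ C * (2 ^ j * n ^ j) := by gcongr
    _ ≤ (C * 2 ^ j + 1) * n ^ j := by nlinarith [pow_nonneg (n.cast_nonneg (α := ℝ)) j]
end

section
/- The number of partitions of n avoiding the pattern (4,2) equals ⌈(n²+3)/4⌉ = n²/4 + (7+(−1)ⁿ)/8 for n ≥ 1, and the generating function Σ_{n≥0} |Av_n((4,2))| zⁿ equals (1 − z + z³)/((1−z)²(1−z²)). -/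
/-- The pattern `(4,2)`. -/
def patFourTwo : ℕ → ℕ := fun i => if i = 0 then 4 else if i = 1 then 2 else 0

/-- The number of partitions of `n` avoiding the pattern `(4,2)`. -/
noncomputable def avFourTwo (n : ℕ) : ℕ :=
  Set.ncard {α : ℕ → ℕ | IsPartitionFun α ∧ (∑ᶠ i, α i) = n ∧ ¬ Contains α patFourTwo}

open Finset

lemma card_range_sdiff_le_add (a b : ℕ) (C : Finset ℕ) :
    #(range a \ C) ≤ #(range b \ C) + (a - b) := by
  have hsub : range a \ C ⊆ (range b \ C) ∪ Ico b a := by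
    intro x hx
    rw [mem_sdiff, mem_range] at hx
    rw [mem_union, mem_sdiff, mem_range, mem_Ico]
    by_cases hxb : x < b
    · exact Or.inl ⟨hxb, hx.2⟩
    · exact Or.inr ⟨by omega, hx.1⟩
  calc #(range a \ C) ≤ #((range b \ C) ∪ Ico b a) := card_le_card hsub
    _ ≤ #(range b \ C) + #(Ico b a) := card_union_le _ _
    _ = #(range b \ C) + (a - b) := by rw [Nat.card_Ico]

lemma range_sdiff_range_sdiff {x y : ℕ} (hxy : x ≤ y) (K : Finset ℕ) :
    range x \ (range y \ K) = range x ∩ K := by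
  ext z
  simp only [mem_sdiff, mem_inter, mem_range]
  constructor
  · rintro ⟨hz, hK⟩
    exact ⟨hz, by by_contra h; exact hK ⟨by omega, h⟩⟩
  · rintro ⟨hz, hK⟩
    exact ⟨hz, fun h => h.2 hK⟩

lemma finsum_eq_sum_range_of_eq_zero {M : Type*} [AddCommMonoid M] {f : ℕ → M} {r : ℕ} (hf : ∀ i, r ≤ i → f i = 0) :
    ∑ᶠ i, f i = ∑ i ∈ range r, f i := by
  apply finsum_eq_sum_of_support_subset
  intro i hi
  rw [coe_range, Set.mem_Iio]
  by_contra h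
  exact hi (hf i (not_lt.mp h))

lemma Antitone.exists_le_apply_iff_lt {β : Type*} [LinearOrder β] {α : ℕ → β}
    (hα : Antitone α) {c : β} (h : ∃ i, α i < c) : ∃ r, ∀ i, c ≤ α i ↔ i < r := by
  classical
  refine ⟨Nat.find h, fun i => ⟨fun hi => ?_, fun hi => not_lt.mp (Nat.find_min h hi)⟩⟩
  by_contra hr
  exact (Nat.find_spec h).not_ge (hi.trans (hα (not_lt.mp hr)))

lemma sq_add_six_div_four_succ (n : ℕ) :
    ((n + 1) ^ 2 + 6) / 4 = (n ^ 2 + 6) / 4 + (n + 1) / 2 := by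
  obtain ⟨j, rfl | rfl⟩ := Nat.even_or_odd' n
  · have : (2 * j + 1) ^ 2 = 4 * (j * j + j) + 1 := by ring
    have : (2 * j) ^ 2 = 4 * (j * j) := by ring
    omega
  · have : (2 * j + 1 + 1) ^ 2 = 4 * (j * j + 2 * j + 1) := by ring
    have : (2 * j + 1) ^ 2 = 4 * (j * j + j) + 1 := by ring
    omega

lemma cast_sq_add_six_div_four (n : ℕ) :
    (((n ^ 2 + 6) / 4 : ℕ) : ℝ) = (n : ℝ) ^ 2 / 4 + (7 + (-1 : ℝ) ^ n) / 8 := by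
  obtain ⟨j, rfl | rfl⟩ := Nat.even_or_odd' n
  · have : ((2 * j) ^ 2 + 6) / 4 = j ^ 2 + 1 := by
      have : (2 * j) ^ 2 = 4 * j ^ 2 := by ring
      omega
    rw [this, (even_two_mul j).neg_one_pow]
    push_cast
    ring
  · have : ((2 * j + 1) ^ 2 + 6) / 4 = j ^ 2 + j + 1 := by
      have : (2 * j + 1) ^ 2 = 4 * (j ^ 2 + j) + 1 := by ring
      omega
    rw [this, (odd_two_mul_add_one j).neg_one_pow]
    push_cast
    ring

lemma sq_add_six_div_four_recurrence (d : ℕ) :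
    ((d + 4) ^ 2 + 6) / 4 + 2 * (((d + 1) ^ 2 + 6) / 4)
      = 2 * (((d + 3) ^ 2 + 6) / 4) + (d ^ 2 + 6) / 4 := by
  have h1 : ((d + 1) ^ 2 + 6) / 4 = (d ^ 2 + 6) / 4 + (d + 1) / 2 := sq_add_six_div_four_succ d
  have h2 : ((d + 2) ^ 2 + 6) / 4 = ((d + 1) ^ 2 + 6) / 4 + (d + 2) / 2 :=
    sq_add_six_div_four_succ (d + 1)
  have h3 : ((d + 3) ^ 2 + 6) / 4 = ((d + 2) ^ 2 + 6) / 4 + (d + 3) / 2 :=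
    sq_add_six_div_four_succ (d + 2)
  have h4 : ((d + 4) ^ 2 + 6) / 4 = ((d + 3) ^ 2 + 6) / 4 + (d + 4) / 2 :=
    sq_add_six_div_four_succ (d + 3)
  omega

open PowerSeries in
lemma mk_sq_add_six_div_four_mul :
    (mk fun n => (((n ^ 2 + 6) / 4 : ℕ) : ℚ)) * ((1 - X) ^ 2 * (1 - X ^ 2))
      = 1 - X + X ^ 3 := by
  set F : PowerSeries ℚ := mk fun n => (((n ^ 2 + 6) / 4 : ℕ) : ℚ)
  have expand : F * ((1 - X) ^ 2 * (1 - X ^ 2))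
      = F - C (2 : ℚ) * (F * X ^ 1) + C (2 : ℚ) * (F * X ^ 3) - F * X ^ 4 := by
    rw [map_ofNat]
    ring
  rw [expand]
  ext d
  simp only [F, map_sub, map_add, coeff_C_mul, coeff_mul_X_pow', coeff_mk, coeff_one, coeff_X,
    coeff_X_pow]
  rcases d with _ | _ | _ | _ | d
  · norm_num
  · norm_num
  · norm_num
  · norm_num
  · simp only [show d + 1 + 1 + 1 + 1 = d + 4 by ring, Nat.add_sub_cancel, if_true,
      le_add_iff_nonneg_left, zero_le]
    rw [show d + 4 - 1 = d + 3 by omega, show d + 4 - 3 = d + 1 by omega,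
      if_neg (by omega), if_neg (by omega), if_neg (by omega)]
    have := congrArg (Nat.cast : ℕ → ℚ) (sq_add_six_div_four_recurrence d)
    push_cast at this
    linarith

lemma Contains.exists_lt_of_patFourTwo {α : ℕ → ℕ}
    (h : Contains α patFourTwo) : ∃ i j, i < j ∧ 2 ≤ α j ∧ α j + 2 ≤ α i := by
  obtain ⟨f, C, hf, hμ⟩ := h
  have h0 : 4 = #(range (α (f 0)) \ C) := hμ 0
  have h1 : 2 = #(range (α (f 1)) \ C) := hμ 1
  have hsdiff : #(range (α (f 1)) \ C) ≤ α (f 1) :=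
    (card_le_card sdiff_subset).trans (card_range _).le
  have := card_range_sdiff_le_add (α (f 0)) (α (f 1)) C
  exact ⟨f 0, f 1, hf zero_lt_one, by omega, by omega⟩

lemma contains_patFourTwo_of_lt {α : ℕ → ℕ} (hα : IsPartitionFun α) {i j : ℕ} (hij : i < j)
    (hj : 2 ≤ α j) (hji : α j + 2 ≤ α i) : Contains α patFourTwo := by
  obtain ⟨-, N, hN⟩ := hα
  -- keep columns `0, 1` (met by both rows) and `α j, α j + 1` (met by row `i` only)
  set K : Finset ℕ := {0, 1, α j, α j + 1}
  have hK : K ⊆ range (α i) := by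
    intro x hx
    simp only [K, mem_insert, mem_singleton] at hx
    simp only [mem_range]
    omega
  refine ⟨fun t => if t = 0 then i else if t = 1 then j else j + N + t, range (α i) \ K,
    fun a b hab => by dsimp only; split_ifs <;> omega, fun t => ?_⟩
  rcases t with _ | _ | t
  · show 4 = #(range (α i) \ (range (α i) \ K))
    rw [range_sdiff_range_sdiff le_rfl, inter_eq_right.mpr hK,
      card_insert_of_notMem (by simp; omega), card_insert_of_notMem (by simp; omega),
      card_pair (by omega)]
  · have hrow : range (α j) ∩ K = {0, 1} := by
      ext x
      simp only [K, mem_inter, mem_range, mem_insert, mem_singleton]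
      omega
    show 2 = #(range (α j) \ (range (α i) \ K))
    rw [range_sdiff_range_sdiff (by omega), hrow, card_pair zero_ne_one]
  · show 0 = #(range (α (j + N + (t + 2))) \ (range (α i) \ K))
    simp [hN (j + N + (t + 2)) (by omega)]

lemma contains_patFourTwo_iff {α : ℕ → ℕ} (hα : IsPartitionFun α) :
    Contains α patFourTwo ↔ ∃ i j, i < j ∧ 2 ≤ α j ∧ α j + 2 ≤ α i :=
  ⟨Contains.exists_lt_of_patFourTwo,
    fun ⟨_, _, hij, hj, hji⟩ => contains_patFourTwo_of_lt hα hij hj hji⟩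

namespace AvFourTwo

/-- The partition `(m + 1)^a m^(k - a) 1^(r - k)`. -/
def blockRows (m a k r : ℕ) : ℕ → ℕ := fun i =>
  if i < a then m + 1 else if i < k then m else if i < r then 1 else 0

section blockRows

variable {m a k r : ℕ}

lemma blockRows_antitone (hm : 0 < k → 2 ≤ m) : Antitone (blockRows m a k r) := by
  intro i j hij
  simp only [blockRows]
  split_ifs <;> omega

lemma blockRows_eq_zero (hak : a ≤ k) (hkr : k ≤ r) {i : ℕ} (hi : r ≤ i) :
    blockRows m a k r i = 0 := by
  simp only [blockRows]
  split_ifs <;> omega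

lemma isPartitionFun_blockRows (hak : a ≤ k) (hkr : k ≤ r) (hm : 0 < k → 2 ≤ m) :
    IsPartitionFun (blockRows m a k r) :=
  ⟨blockRows_antitone hm, r, fun _ hi => blockRows_eq_zero hak hkr hi⟩

lemma two_le_blockRows_iff (hak : a ≤ k) (hm : 0 < k → 2 ≤ m) (i : ℕ) :
    2 ≤ blockRows m a k r i ↔ i < k := by
  simp only [blockRows]
  split_ifs <;> omega

lemma blockRows_le_add_one {j : ℕ} (hj : 2 ≤ blockRows m a k r j) (i : ℕ) :
    blockRows m a k r i ≤ blockRows m a k r j + 1 := by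
  simp only [blockRows] at hj ⊢
  split_ifs at hj ⊢ <;> omega

lemma sum_range_blockRows (hak : a ≤ k) :
    ∑ i ∈ range k, blockRows m a k r i = k * m + a := by
  have hrow : ∀ i ∈ range k, blockRows m a k r i = m + if i < a then 1 else 0 := by
    intro i hi
    rw [mem_range] at hi
    simp only [blockRows]
    split_ifs <;> omega
  have hfilter : (range k).filter (· < a) = range a := by
    ext i
    simp only [mem_filter, mem_range]
    omega
  rw [sum_congr rfl hrow, sum_add_distrib, sum_const, card_range, smul_eq_mul, ← sum_filter,
    hfilter, sum_const, card_range, smul_eq_mul, mul_one]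

lemma sum_range_blockRows_of_le (hak : a ≤ k) (hkr : k ≤ r) :
    ∑ i ∈ range r, blockRows m a k r i = k * m + a + (r - k) := by
  have hones : ∀ i ∈ Ico k r, blockRows m a k r i = 1 := by
    intro i hi
    rw [mem_Ico] at hi
    simp only [blockRows]
    split_ifs <;> omega
  rw [← sum_range_add_sum_Ico _ hkr, sum_range_blockRows hak, sum_congr rfl hones,
    sum_const, Nat.card_Ico, smul_eq_mul, mul_one]

lemma finsum_blockRows (hak : a ≤ k) (hkr : k ≤ r) :
    ∑ᶠ i, blockRows m a k r i = k * m + a + (r - k) := by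
  rw [finsum_eq_sum_range_of_eq_zero fun _ => blockRows_eq_zero hak hkr,
    sum_range_blockRows_of_le hak hkr]

end blockRows

lemma exists_eq_blockRows {α : ℕ → ℕ} (hα : IsPartitionFun α)
    (havoid : ∀ i j, i < j → 2 ≤ α j → α i ≤ α j + 1) :
    ∃ m a k r, a ≤ k ∧ k ≤ r ∧ (0 < k → 2 ≤ m ∧ a < k) ∧ α = blockRows m a k r := by
  obtain ⟨hanti, N, hN⟩ := hα
  have hsmall : ∀ c, 0 < c → ∃ i, α i < c := fun c hc => ⟨N, by rw [hN N le_rfl]; exact hc⟩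
  obtain ⟨r, hr⟩ := hanti.exists_le_apply_iff_lt (hsmall 1 one_pos)
  obtain ⟨k, hk⟩ := hanti.exists_le_apply_iff_lt (hsmall 2 two_pos)
  set m := α (k - 1)
  obtain ⟨a, ha⟩ := hanti.exists_le_apply_iff_lt (c := m + 1) ⟨k - 1, Nat.lt_succ_self m⟩
  have hkr : k ≤ r := by
    by_contra h
    have := (hk r).2 (by omega)
    have := (hr r).1 (by omega)
    omega
  have hak : a ≤ k - 1 := by
    by_contra h
    have := (ha (k - 1)).2 (by omega)
    omega
  have hm : 0 < k → 2 ≤ m := fun hk0 => (hk (k - 1)).2 (by omega)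
  refine ⟨m, a, k, r, by omega, hkr, fun hk0 => ⟨hm hk0, by omega⟩, funext fun i => ?_⟩
  have hmi : i < k → m ≤ α i := fun hi => hanti (by omega)
  have hai : i < k - 1 → α i ≤ m + 1 := fun hi => havoid i (k - 1) hi (hm (by omega))
  have := hr i
  have := hk i
  have := ha i
  simp only [blockRows]
  split_ifs <;> omega

def params (n : ℕ) : Finset (ℕ × ℕ) :=
  (range (n + 1) ×ˢ range (n + 1)).filter
    fun p => p.1 = 0 ∧ p.2 = 0 ∨ 1 ≤ p.1 ∧ 2 * p.1 ≤ p.2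

lemma mem_params {n k t : ℕ} :
    (k, t) ∈ params n ↔ k = 0 ∧ t = 0 ∨ 1 ≤ k ∧ 2 * k ≤ t ∧ t ≤ n := by
  simp only [params, mem_filter, mem_product, mem_range]
  omega

/-- The `(4,2)`-avoiding partition of `n` whose `k` rows of length at least `2` have total
length `t` and are as equal as possible. -/
def avoider (n k t : ℕ) : ℕ → ℕ :=
  blockRows (t / k) (t % k) k (k + (n - t))

section avoider

variable {n k t : ℕ}

lemma mod_le_and_two_le_div_of_mem_params (h : (k, t) ∈ params n) :
    t % k ≤ k ∧ (0 < k → 2 ≤ t / k) := by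
  rw [mem_params] at h
  rcases h with ⟨rfl, rfl⟩ | ⟨hk, h2k, -⟩
  · simp
  · exact ⟨(Nat.mod_lt t hk).le, fun _ => (Nat.le_div_iff_mul_le hk).2 (by omega)⟩

lemma isPartitionFun_avoider (h : (k, t) ∈ params n) : IsPartitionFun (avoider n k t) :=
  have ⟨hmod, hdiv⟩ := mod_le_and_two_le_div_of_mem_params h
  isPartitionFun_blockRows hmod (Nat.le_add_right _ _) hdiv

lemma finsum_avoider (h : (k, t) ∈ params n) : ∑ᶠ i, avoider n k t i = n := by
  obtain ⟨hmod, -⟩ := mod_le_and_two_le_div_of_mem_params h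
  have htn : t ≤ n := by rw [mem_params] at h; omega
  rw [avoider, finsum_blockRows hmod (Nat.le_add_right _ _), Nat.div_add_mod]
  omega

lemma two_le_avoider_iff (h : (k, t) ∈ params n) (i : ℕ) : 2 ≤ avoider n k t i ↔ i < k :=
  have ⟨hmod, hdiv⟩ := mod_le_and_two_le_div_of_mem_params h
  two_le_blockRows_iff hmod hdiv i

lemma sum_range_avoider (h : (k, t) ∈ params n) : ∑ i ∈ range k, avoider n k t i = t := by
  rw [avoider, sum_range_blockRows (mod_le_and_two_le_div_of_mem_params h).1, Nat.div_add_mod]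

lemma avoider_injOn : Set.InjOn (Function.uncurry (avoider n)) (params n) := by
  rintro ⟨k, t⟩ h ⟨k', t'⟩ h' heq
  simp only [Function.uncurry_apply_pair] at heq
  have hk : k = k' := by
    have e : ∀ i, i < k ↔ i < k' := fun i => by
      rw [← two_le_avoider_iff h, heq, two_le_avoider_iff h']
    have := e k
    have := e k'
    omega
  subst hk
  rw [← sum_range_avoider h, heq, sum_range_avoider h']

end avoider

lemma exists_mem_params_avoider_eq {n : ℕ} {α : ℕ → ℕ} (hα : IsPartitionFun α)
    (hsum : ∑ᶠ i, α i = n) (havoid : ∀ i j, i < j → 2 ≤ α j → α i ≤ α j + 1) :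
    ∃ p ∈ params n, Function.uncurry (avoider n) p = α := by
  obtain ⟨m, a, k, r, hak, hkr, hm, rfl⟩ := exists_eq_blockRows hα havoid
  rw [finsum_blockRows hak hkr] at hsum
  rcases Nat.eq_zero_or_pos k with rfl | hk
  · obtain rfl : a = 0 := by omega
    refine ⟨(0, 0), mem_params.2 (Or.inl ⟨rfl, rfl⟩), funext fun i => ?_⟩
    simp only [Function.uncurry_apply_pair, avoider, blockRows]
    split_ifs <;> omega
  · obtain ⟨hm2, hak⟩ := hm hk
    have h2k : k * 2 ≤ k * m := Nat.mul_le_mul_left k hm2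
    refine ⟨(k, k * m + a), mem_params.2 (Or.inr ⟨hk, by omega, by omega⟩), ?_⟩
    have hdiv : (k * m + a) / k = m := by
      rw [Nat.mul_add_div hk, Nat.div_eq_of_lt hak, add_zero]
    have hmod : (k * m + a) % k = a := by rw [Nat.mul_add_mod, Nat.mod_eq_of_lt hak]
    simp only [Function.uncurry_apply_pair, avoider, hdiv, hmod]
    congr 1
    omega

lemma setOf_avoids_patFourTwo_eq_image (n : ℕ) :
    {α : ℕ → ℕ | IsPartitionFun α ∧ (∑ᶠ i, α i) = n ∧ ¬ Contains α patFourTwo}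
      = Function.uncurry (avoider n) '' params n := by
  ext α
  constructor
  · rintro ⟨hα, hsum, hα42⟩
    rw [contains_patFourTwo_iff hα] at hα42
    obtain ⟨p, hp, rfl⟩ := exists_mem_params_avoider_eq hα hsum fun i j hij hj => by
      by_contra h
      exact hα42 ⟨i, j, hij, hj, by omega⟩
    exact ⟨p, hp, rfl⟩
  · rintro ⟨⟨k, t⟩, hp, rfl⟩
    refine ⟨isPartitionFun_avoider hp, finsum_avoider hp, ?_⟩
    show ¬Contains (avoider n k t) patFourTwo
    rw [contains_patFourTwo_iff (isPartitionFun_avoider hp)]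
    rintro ⟨i, j, hij, hj, hji⟩
    have := blockRows_le_add_one hj i
    rw [avoider] at hji
    omega

lemma params_succ (n : ℕ) :
    params (n + 1) = params n ∪ Icc 1 ((n + 1) / 2) ×ˢ {n + 1} := by
  ext ⟨k, t⟩
  simp only [mem_union, mem_params, mem_product, mem_Icc, mem_singleton]
  omega

lemma card_params (n : ℕ) : #(params n) = (n ^ 2 + 6) / 4 := by
  induction n with
  | zero => rfl
  | succ n ih =>
    have hdisj : Disjoint (params n) (Icc 1 ((n + 1) / 2) ×ˢ {n + 1}) := by
      rw [disjoint_right]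
      rintro ⟨k, t⟩ hnew hold
      simp only [mem_product, mem_Icc, mem_singleton] at hnew
      rw [mem_params] at hold
      omega
    rw [params_succ, card_union_of_disjoint hdisj, ih, card_product, Nat.card_Icc,
      card_singleton, mul_one, sq_add_six_div_four_succ, Nat.add_sub_cancel]

end AvFourTwo

open AvFourTwo in
theorem avFourTwo_eq (n : ℕ) : avFourTwo n = (n ^ 2 + 6) / 4 := by
  rw [avFourTwo, setOf_avoids_patFourTwo_eq_image, avoider_injOn.ncard_image,
    Set.ncard_coe_finset, card_params]

/-- `|Av_n((4,2))| = ⌈(n²+3)/4⌉ = n²/4 + (7+(−1)ⁿ)/8` for `n ≥ 1`, and the generating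
function `Σ_{n≥0} |Av_n((4,2))| zⁿ` equals `(1 − z + z³)/((1−z)²(1−z²))`. -/
theorem stmt_17 :
    (∀ n : ℕ, 1 ≤ n →
        avFourTwo n = (n ^ 2 + 3 + 3) / 4 ∧
        (avFourTwo n : ℝ) = (n : ℝ) ^ 2 / 4 + (7 + (-1 : ℝ) ^ n) / 8) ∧
      (PowerSeries.mk fun n => (avFourTwo n : ℚ)) *
          ((1 - PowerSeries.X) ^ 2 * (1 - PowerSeries.X ^ 2))
        = 1 - PowerSeries.X + PowerSeries.X ^ 3 := by
  refine ⟨fun n _ => ⟨avFourTwo_eq n, ?_⟩, ?_⟩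
  · rw [avFourTwo_eq, cast_sq_add_six_div_four]
  · simp only [avFourTwo_eq]
    exact mk_sq_add_six_div_four_mul
end

section
/- Let k ≥ 2. If |Av_n(μ)| ≍ n^{k−1}·(log n)^ℓ for some integer ℓ ≥ 1 (i.e., the counting sequence is bounded above and below by positive constant multiples of n^{k−1} log^ℓ n for large n), then the generating function Σ_{n≥0} |Av_n(μ)| zⁿ is not a rational function. More generally: no integer sequence (aₙ) satisfying aₙ ≍ n^{k−1} log^ℓ n with ℓ ≥ 1 has a rational generating function. -/
/-!
Let `F(x) = ∑ aₙ xⁿ` and `K = k - 1`. Comparing `aₙ` with the coefficients of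
`∑ (n + K).choose K * xⁿ = (1 - x)^-(K+1)` shows, as `x → 1⁻`, that `(1 - x)^(K+1) F(x) → ∞`
(because `n^K = o(aₙ)`, thanks to the logarithm) and `(1 - x)^(K+2) F(x) → 0` (because
`aₙ = o(n^(K+1))`). A rational function is, up to a factor tending to a nonzero constant,
`(1 - x)^d` near `1` for an integer `d`; so it cannot tend to `∞` while `(1 - x)` times it
tends to `0`.
-/

open Filter Finset Polynomial Topology Asymptotics

theorem Polynomial.hasSum_coeff_mul_pow {R : Type*} [NormedCommRing R] (p : R[X]) (x : R) :
    HasSum (fun n => p.coeff n * x ^ n) (p.eval x) := by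
  rw [eval_eq_sum_range]
  refine hasSum_sum_of_ne_finset_zero fun n hn => ?_
  rw [coeff_eq_zero_of_natDegree_lt (by simpa using hn), zero_mul]

theorem PowerSeries.mk_mul_map_eq_map_of_mk_mul_eq {R S : Type*} [CommSemiring R]
    [CommSemiring S] (f : R →+* S) {a : ℕ → R} {p q : R[X]}
    (h : PowerSeries.mk a * (q : PowerSeries R) = p) :
    PowerSeries.mk (fun n => f (a n)) * (q.map f : PowerSeries S) = p.map f := by
  rw [polynomial_map_coe, polynomial_map_coe, ← h, map_mul]
  rfl

theorem tsum_mul_pow_mul_eval_of_mk_mul_eq {R : Type*} [NormedCommRing R] [CompleteSpace R]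
    {a : ℕ → R} {P Q : R[X]} (h : PowerSeries.mk a * (Q : PowerSeries R) = P) {x : R}
    (hx : Summable fun n => ‖a n * x ^ n‖) :
    (∑' n, a n * x ^ n) * Q.eval x = P.eval x := by
  have hQ : Summable fun n => ‖Q.coeff n * x ^ n‖ :=
    summable_of_ne_finset_zero (s := range (Q.natDegree + 1)) fun n hn => by
      rw [coeff_eq_zero_of_natDegree_lt (by simpa using hn), zero_mul, norm_zero]
  rw [← (Q.hasSum_coeff_mul_pow x).tsum_eq, ← (P.hasSum_coeff_mul_pow x).tsum_eq,
    tsum_mul_tsum_eq_tsum_sum_antidiagonal_of_summable_norm hx hQ]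
  refine tsum_congr fun n => ?_
  have hcoeff := congrArg (PowerSeries.coeff n) h
  rw [PowerSeries.coeff_mul] at hcoeff
  simp only [PowerSeries.coeff_mk, Polynomial.coeff_coe] at hcoeff
  rw [← hcoeff, Finset.sum_mul]
  refine Finset.sum_congr rfl fun ij hij => ?_
  rw [← mem_antidiagonal.mp hij, pow_add]
  ring

theorem Polynomial.exists_abs_eval_eq_pow_mul {P : ℝ[X]} (hP : P ≠ 0) (c : ℝ) :
    ∃ (m : ℕ) (R : ℝ[X]), R.eval c ≠ 0 ∧ ∀ x < c, |P.eval x| = (c - x) ^ m * |R.eval x| := by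
  obtain ⟨R, hPR, hRc⟩ := P.exists_eq_pow_rootMultiplicity_mul_and_not_dvd hP c
  refine ⟨P.rootMultiplicity c, R, fun h => hRc (dvd_iff_isRoot.2 h), fun x hx => ?_⟩
  conv_lhs => rw [hPR]
  rw [eval_mul, eval_pow, eval_sub, eval_X, eval_C, abs_mul, abs_pow, abs_sub_comm,
    abs_of_pos (sub_pos.2 hx)]

theorem not_tendsto_sub_mul_nhds_zero_of_tendsto_atTop {r : ℝ → ℝ} {c : ℝ} {P Q : ℝ[X]}
    (hQ : Q ≠ 0) (hrQ : ∀ᶠ x in 𝓝[<] c, r x * Q.eval x = P.eval x)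
    (hr : Tendsto r (𝓝[<] c) atTop) : ¬ Tendsto (fun x => (c - x) * r x) (𝓝[<] c) (𝓝 0) := by
  intro hr₀
  have habs (S : ℝ[X]) : Tendsto (fun x => |S.eval x|) (𝓝[<] c) (𝓝 |S.eval c|) :=
    (S.continuous.abs.tendsto c).mono_left nhdsWithin_le_nhds
  obtain ⟨m, R, hR, hQR⟩ := Q.exists_abs_eval_eq_pow_mul hQ c
  have hrR : Tendsto (fun x => |r x| * |R.eval x|) (𝓝[<] c) atTop :=
    (tendsto_abs_atTop_atTop.comp hr).atTop_mul_pos (abs_pos.2 hR) (habs R)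
  have hnear : ∀ᶠ x in 𝓝[<] c, x < c ∧ c - x ≤ 1 := by
    filter_upwards [Ioo_mem_nhdsLT (sub_one_lt c)] with x hx
    exact ⟨hx.2, by linarith [hx.1]⟩
  have hid : ∀ᶠ x in 𝓝[<] c, (c - x) ^ m * (|r x| * |R.eval x|) = |P.eval x| := by
    filter_upwards [hrQ, hnear] with x hx hxc
    rw [← hx, abs_mul, hQR x hxc.1]
    ring
  by_cases hP : P = 0
  · obtain ⟨x, hx, hxc, hxpos⟩ :=
      (hid.and (hnear.and (hrR.eventually_gt_atTop 0))).exists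
    simp only [hP, eval_zero, abs_zero] at hx
    exact (mul_pos (pow_pos (sub_pos.2 hxc.1) m) hxpos).ne' hx
  obtain ⟨s, T, hT, hPT⟩ := P.exists_abs_eval_eq_pow_mul hP c
  have hid' : ∀ᶠ x in 𝓝[<] c,
      (c - x) ^ m * (|r x| * |R.eval x|) = (c - x) ^ s * |T.eval x| := by
    filter_upwards [hid, hnear] with x hx hxc
    rw [hx, hPT x hxc.1]
  rcases le_or_gt m s with hms | hsm
  · have hle : ∀ᶠ x in 𝓝[<] c, |r x| * |R.eval x| ≤ |T.eval x| := by
      filter_upwards [hid', hnear] with x hx hxc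
      rw [← Nat.add_sub_cancel' hms, pow_add, mul_assoc] at hx
      rw [mul_left_cancel₀ (pow_ne_zero m (sub_pos.2 hxc.1).ne') hx]
      exact mul_le_of_le_one_left (abs_nonneg _) (pow_le_one₀ (sub_pos.2 hxc.1).le hxc.2)
    exact not_tendsto_atTop_of_tendsto_nhds (habs T) (tendsto_atTop_mono' _ hle hrR)
  · have hle : ∀ᶠ x in 𝓝[<] c, |T.eval x| ≤ |(c - x) * r x| * |R.eval x| := by
      filter_upwards [hid', hnear] with x hx hxc
      rw [← Nat.add_sub_cancel' hsm.le, pow_add, mul_assoc] at hx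
      rw [← mul_left_cancel₀ (pow_ne_zero s (sub_pos.2 hxc.1).ne') hx, abs_mul,
        abs_of_pos (sub_pos.2 hxc.1), mul_assoc]
      exact mul_le_mul_of_nonneg_right (pow_le_of_le_one (sub_pos.2 hxc.1).le hxc.2 (by omega))
        (by positivity)
    have := le_of_tendsto_of_tendsto (habs T) (hr₀.abs.mul (habs R)) hle
    simp only [abs_zero, zero_mul] at this
    exact hT (abs_nonpos_iff.1 this)

section Abel

variable {a b : ℕ → ℝ} {x : ℝ}

theorem eventually_mul_one_sub_pow_lt (D : ℝ) (K : ℕ) {ε : ℝ} (hε : 0 < ε) :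
    ∀ᶠ x in 𝓝[<] (1 : ℝ), D * (1 - x) ^ (K + 1) < ε := by
  have hcont : Continuous fun x : ℝ => D * (1 - x) ^ (K + 1) := by fun_prop
  exact ((hcont.tendsto 1).mono_left nhdsWithin_le_nhds).eventually_lt_const (by simpa using hε)

theorem tsum_mul_pow_le_add_of_le (hx₀ : 0 ≤ x) (hx₁ : x ≤ 1)
    (ha : Summable fun n => a n * x ^ n) (hb : Summable fun n => b n * x ^ n) {N : ℕ}
    (hab : ∀ n ≥ N, a n ≤ b n) :
    ∑' n, a n * x ^ n ≤ ∑' n, b n * x ^ n + ∑ n ∈ range N, |a n - b n| := by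
  have hsplit := (ha.sub hb).sum_add_tsum_nat_add N
  have hhead : ∑ n ∈ range N, (a n - b n) * x ^ n ≤ ∑ n ∈ range N, |a n - b n| :=
    sum_le_sum fun n _ => (le_abs_self _).trans
      (by rw [abs_mul, abs_of_nonneg (pow_nonneg hx₀ n)]
          exact mul_le_of_le_one_right (abs_nonneg _) (pow_le_one₀ hx₀ hx₁))
  have htail : ∑' n, (a (n + N) - b (n + N)) * x ^ (n + N) ≤ 0 :=
    tsum_nonpos fun n => mul_nonpos_of_nonpos_of_nonneg
      (sub_nonpos.2 (hab _ (Nat.le_add_left N n))) (pow_nonneg hx₀ _)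
  rw [Summable.tsum_sub ha hb] at hsplit
  simp only [sub_mul] at hsplit hhead htail
  linarith

theorem summable_norm_mul_pow_of_isBigO_choose {K : ℕ}
    (h : a =O[atTop] fun n => ((n + K).choose K : ℝ)) (hx : ‖x‖ < 1) :
    Summable fun n => ‖a n * x ^ n‖ := by
  refine summable_of_isBigO_nat (summable_choose_mul_geometric_of_norm_lt_one K
    (r := ‖x‖) (by rwa [norm_norm])) ?_
  simpa only [norm_mul, norm_pow] using h.norm_left.mul (isBigO_refl (fun n => ‖x‖ ^ n) atTop)

theorem tendsto_one_sub_pow_mul_tsum_atTop {K : ℕ}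
    (hw : (fun n => ((n + K).choose K : ℝ)) =o[atTop] a) (ha : ∀ᶠ n in atTop, 0 ≤ a n)
    (hsum : ∀ x ∈ Set.Ioo (0 : ℝ) 1, Summable fun n => a n * x ^ n) :
    Tendsto (fun x => (1 - x) ^ (K + 1) * ∑' n, a n * x ^ n) (𝓝[<] 1) atTop := by
  refine tendsto_atTop.2 fun M => ?_
  obtain ⟨N, hN⟩ : ∃ N, ∀ n ≥ N, (M + 1) * ((n + K).choose K : ℝ) ≤ a n := by
    refine eventually_atTop.1 ((hw.bound (c := (|M| + 1)⁻¹) (by positivity)).and ha |>.mono ?_)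
    rintro n ⟨hn, han⟩
    rw [Real.norm_natCast, Real.norm_of_nonneg han, inv_mul_eq_div,
      le_div_iff₀ (by positivity)] at hn
    calc (M + 1) * ((n + K).choose K : ℝ) ≤ (|M| + 1) * ((n + K).choose K : ℝ) := by
          gcongr; exact le_abs_self M
      _ ≤ a n := by linarith
  filter_upwards [Ioo_mem_nhdsLT one_pos, eventually_mul_one_sub_pow_lt
    (∑ n ∈ range N, |(M + 1) * ((n + K).choose K : ℝ) - a n|) K one_pos] with x hx hD
  have hx' : ‖x‖ < 1 := by rw [Real.norm_of_nonneg hx.1.le]; exact hx.2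
  have hpos : 0 < (1 - x) ^ (K + 1) := pow_pos (by linarith [hx.2]) _
  have hw := (summable_choose_mul_geometric_of_norm_lt_one K hx').mul_left (M + 1)
  have key := tsum_mul_pow_le_add_of_le (a := fun n => (M + 1) * ((n + K).choose K : ℝ))
    hx.1.le hx.2.le (by simpa only [mul_assoc] using hw) (hsum x hx) hN
  simp only [mul_assoc] at key
  rw [tsum_mul_left, tsum_choose_mul_geometric_of_norm_lt_one K hx', mul_one_div,
    div_le_iff₀ hpos] at key
  linarith

theorem tendsto_one_sub_pow_mul_tsum_zero {K : ℕ}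
    (h : a =o[atTop] fun n => ((n + K).choose K : ℝ)) :
    Tendsto (fun x => (1 - x) ^ (K + 1) * ∑' n, a n * x ^ n) (𝓝[<] 1) (𝓝 0) := by
  refine Metric.tendsto_nhds.2 fun ε hε => ?_
  obtain ⟨N, hN⟩ := eventually_atTop.1 (h.bound (half_pos hε))
  set D := ∑ n ∈ range N, |(|a n| - ε / 2 * ((n + K).choose K : ℝ))| with hD_def
  filter_upwards [Ioo_mem_nhdsLT one_pos, eventually_mul_one_sub_pow_lt D K (half_pos hε)]
    with x hx hD
  have hx' : ‖x‖ < 1 := by rw [Real.norm_of_nonneg hx.1.le]; exact hx.2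
  have hpos : 0 < (1 - x) ^ (K + 1) := pow_pos (by linarith [hx.2]) _
  have hnorm := summable_norm_mul_pow_of_isBigO_choose h.isBigO hx'
  have habs : ∀ n, ‖a n * x ^ n‖ = |a n| * x ^ n := fun n => by
    rw [norm_mul, norm_pow, Real.norm_eq_abs, Real.norm_eq_abs, abs_of_pos hx.1]
  have hF : |∑' n, a n * x ^ n| ≤ ∑' n, |a n| * x ^ n :=
    (norm_tsum_le_tsum_norm hnorm).trans_eq (tsum_congr habs)
  simp only [habs] at hnorm
  have hw := (summable_choose_mul_geometric_of_norm_lt_one K hx').mul_left (ε / 2)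
  have key := tsum_mul_pow_le_add_of_le (b := fun n => ε / 2 * ((n + K).choose K : ℝ))
    hx.1.le hx.2.le hnorm (by simpa only [mul_assoc] using hw)
    (fun n hn => by simpa using hN n hn)
  simp only [mul_assoc] at key
  rw [tsum_mul_left, tsum_choose_mul_geometric_of_norm_lt_one K hx', mul_one_div,
    ← hD_def] at key
  rw [Real.dist_0_eq_abs, abs_mul, abs_of_pos hpos]
  calc (1 - x) ^ (K + 1) * |∑' n, a n * x ^ n|
      ≤ (1 - x) ^ (K + 1) * (ε / 2 / (1 - x) ^ (K + 1) + D) := by gcongr; exact hF.trans key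
    _ = ε / 2 + D * (1 - x) ^ (K + 1) := by field_simp
    _ < ε := by linarith

end Abel

theorem isTheta_choose_add_pow (K : ℕ) :
    (fun n : ℕ => ((n + K).choose K : ℝ)) =Θ[atTop] fun n => (n : ℝ) ^ K := by
  refine ⟨IsBigO.of_bound (2 ^ K) ?_, IsBigO.of_bound K.factorial ?_⟩
  · filter_upwards [eventually_ge_atTop K] with n hn
    rw [Real.norm_natCast, norm_pow, Real.norm_natCast, ← mul_pow]
    calc ((n + K).choose K : ℝ) ≤ ((n + K : ℕ) : ℝ) ^ K := mod_cast Nat.choose_le_pow _ _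
      _ ≤ (2 * n) ^ K := by gcongr; push_cast; linarith [(Nat.cast_le (α := ℝ)).2 hn]
  · refine Eventually.of_forall fun n => ?_
    rw [Real.norm_natCast, norm_pow, Real.norm_natCast]
    have h := Nat.pow_sub_le_descFactorial (n + K) K
    rw [Nat.descFactorial_eq_factorial_mul_choose, Nat.add_right_comm, Nat.add_sub_cancel] at h
    exact_mod_cast (Nat.pow_le_pow_left n.le_succ K).trans h

theorem isLittleO_pow_pow_mul_log_pow (K : ℕ) {ℓ : ℕ} (hℓ : ℓ ≠ 0) :
    (fun n : ℕ => (n : ℝ) ^ K) =o[atTop] fun n => (n : ℝ) ^ K * Real.log n ^ ℓ := by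
  have hlog : Tendsto (fun n : ℕ => ‖Real.log n ^ ℓ‖) atTop atTop :=
    tendsto_norm_atTop_atTop.comp <| (tendsto_pow_atTop hℓ).comp <|
      Real.tendsto_log_atTop.comp tendsto_natCast_atTop_atTop
  simpa using (isBigO_refl (fun n : ℕ => (n : ℝ) ^ K) atTop).mul_isLittleO
    ((isLittleO_one_left_iff ℝ).2 hlog)

theorem isLittleO_pow_mul_log_pow_pow_succ (K ℓ : ℕ) :
    (fun n : ℕ => (n : ℝ) ^ K * Real.log n ^ ℓ) =o[atTop] fun n => (n : ℝ) ^ (K + 1) := by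
  simpa only [pow_succ, Function.comp_def, id] using
    (isBigO_refl (fun n : ℕ => (n : ℝ) ^ K) atTop).mul_isLittleO
      (Real.isLittleO_pow_log_id_atTop.comp_tendsto tendsto_natCast_atTop_atTop)

theorem isTheta_of_eventually_mul_le_le_mul {α : Type*} {l : Filter α} {f g : α → ℝ}
    {c₁ c₂ : ℝ} (hc₁ : 0 < c₁) (hg : ∀ᶠ x in l, 0 ≤ g x)
    (h : ∀ᶠ x in l, c₁ * g x ≤ f x ∧ f x ≤ c₂ * g x) : f =Θ[l] g := by
  have hf : ∀ᶠ x in l, 0 ≤ f x := by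
    filter_upwards [hg, h] with x hgx hx using (mul_nonneg hc₁.le hgx).trans hx.1
  refine ⟨IsBigO.of_bound c₂ ?_, IsBigO.of_bound c₁⁻¹ ?_⟩ <;>
    filter_upwards [hg, hf, h] with x hgx hfx hx <;>
    rw [Real.norm_of_nonneg hgx, Real.norm_of_nonneg hfx]
  · exact hx.2
  · rw [le_inv_mul_iff₀ hc₁]; exact hx.1

theorem stmt_19_general (k ℓ : ℕ) (hℓ : 1 ≤ ℓ) (a : ℕ → ℤ)
    (hgrowth : ∃ c₁ c₂ : ℝ, 0 < c₁ ∧ 0 < c₂ ∧ ∃ N : ℕ, ∀ n ≥ N,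
      c₁ * (n : ℝ) ^ (k - 1) * Real.log n ^ ℓ ≤ (a n : ℝ) ∧
      (a n : ℝ) ≤ c₂ * (n : ℝ) ^ (k - 1) * Real.log n ^ ℓ) :
    ¬ ∃ p q : Polynomial ℚ, q ≠ 0 ∧
      (PowerSeries.mk fun n => (a n : ℚ)) * (q : PowerSeries ℚ) = (p : PowerSeries ℚ) := by
  rintro ⟨p, q, hq, hpq⟩
  obtain ⟨c₁, c₂, hc₁, -, N, hN⟩ := hgrowth
  set K := k - 1
  set u : ℕ → ℝ := fun n => (n : ℝ) ^ K * Real.log n ^ ℓ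
  have hbounds : ∀ᶠ n in atTop, c₁ * u n ≤ a n ∧ a n ≤ c₂ * u n :=
    eventually_atTop.2 ⟨N, fun n hn => by simpa only [u, mul_assoc] using hN n hn⟩
  have hu : ∀ᶠ n in atTop, 0 ≤ u n :=
    Eventually.of_forall fun n => by have := Real.log_natCast_nonneg n; positivity
  have ha : ∀ᶠ n in atTop, (0 : ℝ) ≤ a n := by
    filter_upwards [hu, hbounds] with n hun hn using (mul_nonneg hc₁.le hun).trans hn.1
  have hau := isTheta_of_eventually_mul_le_le_mul hc₁ hu hbounds
  have hsmall : (fun n => (a n : ℝ)) =o[atTop] fun n => ((n + (K + 1)).choose (K + 1) : ℝ) :=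
    hau.isBigO.trans_isLittleO ((isLittleO_pow_mul_log_pow_pow_succ K ℓ).trans_isBigO
      (isTheta_choose_add_pow (K + 1)).symm.isBigO)
  have hlarge : (fun n => ((n + K).choose K : ℝ)) =o[atTop] fun n => (a n : ℝ) :=
    ((isTheta_choose_add_pow K).isBigO.trans_isLittleO
      (isLittleO_pow_pow_mul_log_pow K (by omega))).trans_isBigO hau.symm.isBigO
  have hsum : ∀ x ∈ Set.Ioo (0 : ℝ) 1, Summable fun n => ‖(a n : ℝ) * x ^ n‖ := fun x hx =>
    summable_norm_mul_pow_of_isBigO_choose hsmall.isBigO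
      (by rw [Real.norm_of_nonneg hx.1.le]; exact hx.2)
  have hpqℝ := PowerSeries.mk_mul_map_eq_map_of_mk_mul_eq (algebraMap ℚ ℝ) hpq
  simp only [eq_ratCast, Rat.cast_intCast] at hpqℝ
  refine not_tendsto_sub_mul_nhds_zero_of_tendsto_atTop
    (P := (1 - X) ^ (K + 1) * p.map (algebraMap ℚ ℝ)) (map_ne_zero (f := algebraMap ℚ ℝ) hq) ?_
    (tendsto_one_sub_pow_mul_tsum_atTop hlarge ha fun x hx => (hsum x hx).of_norm) ?_
  · filter_upwards [Ioo_mem_nhdsLT (zero_lt_one' ℝ)] with x hx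
    rw [mul_assoc, tsum_mul_pow_mul_eval_of_mk_mul_eq hpqℝ (hsum x hx)]
    simp
  · simpa only [← mul_assoc, ← pow_succ'] using tendsto_one_sub_pow_mul_tsum_zero hsmall

/-- No integer sequence `aₙ ≍ n^{k−1}·(log n)^ℓ` with `k ≥ 2`, `ℓ ≥ 1` has a rational
generating function: there are no polynomials `p, q` with `q ≠ 0` and
`(Σ aₙ zⁿ)·q = p` as formal power series. -/
theorem stmt_19 (k ℓ : ℕ) (hk : 2 ≤ k) (hℓ : 1 ≤ ℓ) (a : ℕ → ℤ)
    (hgrowth : ∃ c₁ c₂ : ℝ, 0 < c₁ ∧ 0 < c₂ ∧ ∃ N : ℕ, ∀ n ≥ N,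
      c₁ * (n : ℝ) ^ (k - 1) * Real.log n ^ ℓ ≤ (a n : ℝ) ∧
      (a n : ℝ) ≤ c₂ * (n : ℝ) ^ (k - 1) * Real.log n ^ ℓ) :
    ¬ ∃ p q : Polynomial ℚ, q ≠ 0 ∧
      (PowerSeries.mk fun n => (a n : ℚ)) * (q : PowerSeries ℚ) = (p : PowerSeries ℚ) :=
  stmt_19_general k ℓ hℓ a hgrowth
end
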